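/- Let H be a real Hilbert space, let k_1, …, k_J be finitely many vectors of H, let G : ℝ^J → ℝ be an arbitrary function, and let ψ : ℝ → [0, ∞) be strictly monotonically increasing. Define F(f) = G(⟨f, k_1⟩, …, ⟨f, k_J⟩) + ψ(‖f‖) for f ∈ H. Then every minimizer f* of F over H lies in the linear span of {k_1, …, k_J}. -/

import Mathlib

/-- Abstract Hilbert-space Representer Theorem: if the objective depends on `f`
only through finitely many inner products `⟪f, k j⟫` plus a strictly monotonically
increasing function of `‖f‖`, then every minimizer lies in the span of the `k j`. -/
theorem representer_theorem
    {H : Type*} [NormedAddCommGroup H] [InnerProductSpace ℝ H] [CompleteSpace H]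
    {J : ℕ} (k : Fin J → H) (G : (Fin J → ℝ) → ℝ) (ψ : ℝ → ℝ)
    (hψ_nonneg : ∀ x, 0 ≤ ψ x) (hψ_mono : StrictMono ψ)
    (F : H → ℝ)
    (hF : ∀ f : H, F f = G (fun j => (inner ℝ f (k j) : ℝ)) + ψ ‖f‖)
    (fstar : H) (hmin : ∀ f : H, F fstar ≤ F f) :
    fstar ∈ Submodule.span ℝ (Set.range k) := by
  set V : Submodule ℝ H := Submodule.span ℝ (Set.range k) with hV
  haveI : FiniteDimensional ℝ V :=
    FiniteDimensional.span_of_finite ℝ (Set.finite_range k)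
  haveI : CompleteSpace V := FiniteDimensional.complete ℝ V
  set v : H := (V.starProjection fstar : H) with hv
  have hvV : v ∈ V := (V.orthogonalProjectionOnto fstar).2
  have horth : fstar - v ∈ Vᗮ := Submodule.sub_starProjection_mem_orthogonal fstar
  -- inner products agree
  have hinner : ∀ j, (inner ℝ fstar (k j) : ℝ) = inner ℝ v (k j) := by
    intro j
    have hk : k j ∈ V := Submodule.subset_span ⟨j, rfl⟩
    have := horth (k j) hk
    have h0 : (inner ℝ (fstar - v) (k j) : ℝ) = 0 := by
      rwa [real_inner_comm]
    have := inner_sub_left (𝕜 := ℝ) fstar v (k j)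
    linarith [h0, this]
  -- From minimality at v, ψ‖fstar‖ ≤ ψ‖v‖
  have hF1 := hmin v
  rw [hF fstar, hF v] at hF1
  have hG : G (fun j => (inner ℝ fstar (k j) : ℝ)) = G (fun j => (inner ℝ v (k j) : ℝ)) := by
    congr 1; funext j; exact hinner j
  have hψle : ψ ‖fstar‖ ≤ ψ ‖v‖ := by linarith [hF1, hG.le, hG.ge]
  have hnorm : ‖fstar‖ ≤ ‖v‖ := by
    by_contra h
    exact absurd (hψ_mono (lt_of_not_ge h)) (not_lt.mpr hψle)
  -- Pythagoras: ‖fstar‖² = ‖v‖² + ‖fstar - v‖²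
  have hpyth : ‖fstar‖ ^ 2 = ‖v‖ ^ 2 + ‖fstar - v‖ ^ 2 := by
    have hperp : (inner ℝ v (fstar - v) : ℝ) = 0 := horth v hvV
    have := norm_add_sq_real v (fstar - v)
    simp only [add_sub_cancel] at this
    rw [this, hperp]; ring
  have hzero : fstar - v = 0 := by
    have h1 : ‖fstar‖ ^ 2 ≤ ‖v‖ ^ 2 := by
      apply pow_le_pow_left₀ (norm_nonneg _) hnorm
    have h2 : ‖fstar - v‖ ^ 2 ≤ 0 := by linarith
    have := sq_nonneg ‖fstar - v‖
    have : ‖fstar - v‖ ^ 2 = 0 := le_antisymm h2 this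
    have : ‖fstar - v‖ = 0 := by
      nlinarith [norm_nonneg (fstar - v)]
    exact norm_eq_zero.mp this
  have : fstar = v := by
    have := sub_eq_zero.mp hzero; exact this
  rw [this, hV] at *
  exact hvV
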